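/- Let A, H be Hopf quasigroups and let (A, φ_A) be a left H-quasimodule which is both a quasimodule magma and a quasimodule comonoid and satisfies (H⊗φ_A)∘((c_{H,H}∘δ_H)⊗A) = (H⊗φ_A)∘(δ_H⊗A) and φ_A∘(H⊗(φ_A∘(λ_H⊗A))) = φ_A∘((μ_H∘(H⊗λ_H))⊗A). Then Ψ = (φ_A⊗H)∘(H⊗c_{H,A})∘(δ_H⊗A) satisfies Ψ∘(H⊗λ_A) = (λ_A⊗H)∘Ψ. -/
import Mathlib


open TensorProduct

noncomputable section

/-- A Hopf quasigroup over a commutative ring `R` (Klim–Majid), given by a unital magma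
and comonoid structure on `H` whose counit and comultiplication are unital magma morphisms,
together with an antipode satisfying the four Hopf quasigroup identities. -/
structure HopfQuasigroup (R : Type*) [CommRing R] (H : Type*) [AddCommGroup H] [Module R H] :
    Type _ where
  mul : H ⊗[R] H →ₗ[R] H
  unit : H
  counit : H →ₗ[R] R
  comul : H →ₗ[R] H ⊗[R] H
  antipode : H →ₗ[R] H
  mul_unit_left : ∀ h : H, mul (unit ⊗ₜ[R] h) = h
  mul_unit_right : ∀ h : H, mul (h ⊗ₜ[R] unit) = h
  coassoc : (TensorProduct.assoc R H H H).toLinearMap ∘ₗ comul.rTensor H ∘ₗ comul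
      = comul.lTensor H ∘ₗ comul
  counit_left : (TensorProduct.lid R H).toLinearMap ∘ₗ counit.rTensor H ∘ₗ comul = LinearMap.id
  counit_right : (TensorProduct.rid R H).toLinearMap ∘ₗ counit.lTensor H ∘ₗ comul = LinearMap.id
  counit_unit : counit unit = 1
  counit_mul : counit ∘ₗ mul
      = (TensorProduct.lid R R).toLinearMap ∘ₗ TensorProduct.map counit counit
  comul_unit : comul unit = unit ⊗ₜ[R] unit
  comul_mul : comul ∘ₗ mul = TensorProduct.map mul mul
      ∘ₗ (TensorProduct.tensorTensorTensorComm R H H H H).toLinearMap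
      ∘ₗ TensorProduct.map comul comul
  antipode_lH₁ : mul ∘ₗ TensorProduct.map antipode mul
      ∘ₗ (TensorProduct.assoc R H H H).toLinearMap ∘ₗ comul.rTensor H
      = (TensorProduct.lid R H).toLinearMap ∘ₗ counit.rTensor H
  antipode_lH₂ : mul ∘ₗ mul.lTensor H ∘ₗ (antipode.rTensor H).lTensor H
      ∘ₗ (TensorProduct.assoc R H H H).toLinearMap ∘ₗ comul.rTensor H
      = (TensorProduct.lid R H).toLinearMap ∘ₗ counit.rTensor H
  antipode_rH₁ : mul ∘ₗ mul.rTensor H ∘ₗ (TensorProduct.assoc R H H H).symm.toLinearMap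
      ∘ₗ (antipode.rTensor H).lTensor H ∘ₗ comul.lTensor H
      = (TensorProduct.rid R H).toLinearMap ∘ₗ counit.lTensor H
  antipode_rH₂ : mul ∘ₗ TensorProduct.map mul antipode
      ∘ₗ (TensorProduct.assoc R H H H).symm.toLinearMap ∘ₗ comul.lTensor H
      = (TensorProduct.rid R H).toLinearMap ∘ₗ counit.lTensor H

section Quasimodule

variable {R : Type*} [CommRing R] {A H : Type*}
  [AddCommGroup A] [Module R A] [AddCommGroup H] [Module R H]

/-- `(A, φ)` is a left `H`-quasimodule which is both a quasimodule magma and a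
quasimodule comonoid. -/
def IsQuasimoduleMagmaComonoid (hA : HopfQuasigroup R A) (hH : HopfQuasigroup R H)
    (φ : H ⊗[R] A →ₗ[R] A) : Prop :=
  (∀ a : A, φ (hH.unit ⊗ₜ[R] a) = a) ∧
  (φ ∘ₗ φ.lTensor H ∘ₗ (TensorProduct.assoc R H H A).toLinearMap
      ∘ₗ ((hH.antipode.lTensor H ∘ₗ hH.comul).rTensor A)
    = (TensorProduct.lid R A).toLinearMap ∘ₗ hH.counit.rTensor A) ∧
  (φ ∘ₗ TensorProduct.map hH.antipode φ ∘ₗ (TensorProduct.assoc R H H A).toLinearMap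
      ∘ₗ hH.comul.rTensor A
    = (TensorProduct.lid R A).toLinearMap ∘ₗ hH.counit.rTensor A) ∧
  (∀ h : H, φ (h ⊗ₜ[R] hA.unit) = hH.counit h • hA.unit) ∧
  (hA.mul ∘ₗ TensorProduct.map φ φ
      ∘ₗ (TensorProduct.tensorTensorTensorComm R H H A A).toLinearMap
      ∘ₗ hH.comul.rTensor (A ⊗[R] A)
    = φ ∘ₗ hA.mul.lTensor H) ∧
  (hA.counit ∘ₗ φ
    = (TensorProduct.lid R R).toLinearMap ∘ₗ TensorProduct.map hH.counit hA.counit) ∧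
  (hA.comul ∘ₗ φ = TensorProduct.map φ φ
      ∘ₗ (TensorProduct.tensorTensorTensorComm R H H A A).toLinearMap
      ∘ₗ hH.comul.rTensor (A ⊗[R] A) ∘ₗ hA.comul.lTensor H)

/-- Condition (cesp1): `(H⊗φ)∘((c_{H,H}∘δ_H)⊗A) = (H⊗φ)∘(δ_H⊗A)`. -/
def Cesp1 (hH : HopfQuasigroup R H) (φ : H ⊗[R] A →ₗ[R] A) : Prop :=
  φ.lTensor H ∘ₗ (TensorProduct.assoc R H H A).toLinearMap
      ∘ₗ (((TensorProduct.comm R H H).toLinearMap ∘ₗ hH.comul).rTensor A)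
    = φ.lTensor H ∘ₗ (TensorProduct.assoc R H H A).toLinearMap ∘ₗ hH.comul.rTensor A

/-- Condition (cesp2): `φ∘(H⊗(φ∘(λ_H⊗A))) = φ∘((μ_H∘(H⊗λ_H))⊗A)`. -/
def Cesp2 (hH : HopfQuasigroup R H) (φ : H ⊗[R] A →ₗ[R] A) : Prop :=
  φ ∘ₗ (φ ∘ₗ hH.antipode.rTensor A).lTensor H
    = φ ∘ₗ ((hH.mul ∘ₗ hH.antipode.lTensor H).rTensor A)
      ∘ₗ (TensorProduct.assoc R H H A).symm.toLinearMap

/-- Condition (cesp4): `φ̂∘(H⊗φ) = φ∘(H⊗φ̂)∘(c_{H,H}⊗A)`. -/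
def Cesp4 (φ φhat : H ⊗[R] A →ₗ[R] A) : Prop :=
  φhat ∘ₗ φ.lTensor H
    = φ ∘ₗ φhat.lTensor H ∘ₗ (TensorProduct.assoc R H H A).toLinearMap
      ∘ₗ ((TensorProduct.comm R H H).toLinearMap).rTensor A
      ∘ₗ (TensorProduct.assoc R H H A).symm.toLinearMap

/-- The smash product morphism `Ψ = (φ⊗H)∘(H⊗c_{H,A})∘(δ_H⊗A) : H⊗A → A⊗H`. -/
def smashPsi (hH : HopfQuasigroup R H) (φ : H ⊗[R] A →ₗ[R] A) :
    H ⊗[R] A →ₗ[R] A ⊗[R] H :=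
  φ.rTensor H ∘ₗ (TensorProduct.assoc R H A H).symm.toLinearMap
    ∘ₗ ((TensorProduct.comm R H A).toLinearMap).lTensor H
    ∘ₗ (TensorProduct.assoc R H H A).toLinearMap ∘ₗ hH.comul.rTensor A

end Quasimodule

section AuxPlumb

variable {R : Type*} [CommRing R]
variable {M N P Q M' N' P' Q' : Type*}
  [AddCommGroup M] [Module R M] [AddCommGroup N] [Module R N]
  [AddCommGroup P] [Module R P] [AddCommGroup Q] [Module R Q]
  [AddCommGroup M'] [Module R M'] [AddCommGroup N'] [Module R N']
  [AddCommGroup P'] [Module R P'] [AddCommGroup Q'] [Module R Q']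

lemma aux_ttc_natural (a : M →ₗ[R] M') (b : N →ₗ[R] N') (c : P →ₗ[R] P') (d : Q →ₗ[R] Q') :
    (tensorTensorTensorComm R M' N' P' Q').toLinearMap ∘ₗ map (map a b) (map c d)
      = map (map a c) (map b d) ∘ₗ (tensorTensorTensorComm R M N P Q).toLinearMap := by
  apply TensorProduct.ext_fourfold'
  intro w x y z
  simp

lemma aux_assoc_natural (f : M →ₗ[R] M') (g : N →ₗ[R] N') (h : P →ₗ[R] P') :
    (TensorProduct.assoc R M' N' P').toLinearMap ∘ₗ map (map f g) h
      = map f (map g h) ∘ₗ (TensorProduct.assoc R M N P).toLinearMap := by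
  apply TensorProduct.ext_threefold
  intro x y z
  simp

lemma aux_lid_map (f : M →ₗ[R] R) (g : N →ₗ[R] P) :
    (TensorProduct.lid R P).toLinearMap ∘ₗ map f g
      = g ∘ₗ (TensorProduct.lid R N).toLinearMap ∘ₗ f.rTensor N := by
  apply TensorProduct.ext'
  intro x y
  simp

lemma aux_rid_map (f : N →ₗ[R] R) (g : M →ₗ[R] P) :
    (TensorProduct.rid R P).toLinearMap ∘ₗ map g f
      = g ∘ₗ (TensorProduct.rid R M).toLinearMap ∘ₗ f.lTensor M := by
  apply TensorProduct.ext'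
  intro x y
  simp

lemma aux_lid_ttc (f : M →ₗ[R] R) (g : P →ₗ[R] R) :
    (TensorProduct.lid R (N ⊗[R] Q)).toLinearMap
        ∘ₗ ((TensorProduct.lid R R).toLinearMap ∘ₗ map f g).rTensor (N ⊗[R] Q)
        ∘ₗ (tensorTensorTensorComm R M N P Q).toLinearMap
      = map ((TensorProduct.lid R N).toLinearMap ∘ₗ f.rTensor N)
          ((TensorProduct.lid R Q).toLinearMap ∘ₗ g.rTensor Q) := by
  apply TensorProduct.ext_fourfold'
  intro w x y z
  simp [smul_tmul', tmul_smul, smul_smul, mul_comm]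

lemma aux_rid_ttc (f : N →ₗ[R] R) (g : Q →ₗ[R] R) :
    (TensorProduct.rid R (M ⊗[R] P)).toLinearMap
        ∘ₗ (((TensorProduct.lid R R).toLinearMap ∘ₗ map f g).lTensor (M ⊗[R] P))
        ∘ₗ (tensorTensorTensorComm R M N P Q).toLinearMap
      = map ((TensorProduct.rid R M).toLinearMap ∘ₗ f.lTensor M)
          ((TensorProduct.rid R P).toLinearMap ∘ₗ g.lTensor P) := by
  apply TensorProduct.ext_fourfold'
  intro w x y z
  simp [smul_tmul', tmul_smul, smul_smul, mul_comm]

lemma aux_coassoc_plumb (M N : Type*) [AddCommGroup M] [Module R M]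
    [AddCommGroup N] [Module R N] :
    (TensorProduct.assoc R (M ⊗[R] N) (M ⊗[R] N) (M ⊗[R] N)).toLinearMap
        ∘ₗ ((tensorTensorTensorComm R M M N N).toLinearMap).rTensor (M ⊗[R] N)
        ∘ₗ (tensorTensorTensorComm R (M ⊗[R] M) M (N ⊗[R] N) N).toLinearMap
        ∘ₗ map (TensorProduct.assoc R M M M).symm.toLinearMap
            (TensorProduct.assoc R N N N).symm.toLinearMap
      = ((tensorTensorTensorComm R M M N N).toLinearMap).lTensor (M ⊗[R] N)
        ∘ₗ (tensorTensorTensorComm R M (M ⊗[R] M) N (N ⊗[R] N)).toLinearMap := by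
  apply TensorProduct.ext_fourfold'
  intro w x y z
  induction x using TensorProduct.induction_on with
  | zero => simp
  | tmul a b =>
      induction z using TensorProduct.induction_on with
      | zero => simp
      | tmul c d => simp
      | add z₁ z₂ h₁ h₂ => simp only [tmul_add, map_add, h₁, h₂]
  | add x₁ x₂ h₁ h₂ => simp only [tmul_add, add_tmul, map_add, h₁, h₂]

end AuxPlumb

section Core

variable {R : Type*} [CommRing R] {A H : Type*}
  [AddCommGroup A] [Module R A] [AddCommGroup H] [Module R H]

theorem phi_antipode_core
    (μA : A ⊗[R] A →ₗ[R] A) (uA : A) (εA : A →ₗ[R] R) (δA : A →ₗ[R] A ⊗[R] A)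
    (S : A →ₗ[R] A) (δH : H →ₗ[R] H ⊗[R] H) (εH : H →ₗ[R] R)
    (φ : H ⊗[R] A →ₗ[R] A)
    (coassocH : (TensorProduct.assoc R H H H).toLinearMap ∘ₗ δH.rTensor H ∘ₗ δH
      = δH.lTensor H ∘ₗ δH)
    (coassocA : (TensorProduct.assoc R A A A).toLinearMap ∘ₗ δA.rTensor A ∘ₗ δA
      = δA.lTensor A ∘ₗ δA)
    (counitHl : (TensorProduct.lid R H).toLinearMap ∘ₗ εH.rTensor H ∘ₗ δH = LinearMap.id)
    (counitHr : (TensorProduct.rid R H).toLinearMap ∘ₗ εH.lTensor H ∘ₗ δH = LinearMap.id)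
    (counitAl : (TensorProduct.lid R A).toLinearMap ∘ₗ εA.rTensor A ∘ₗ δA = LinearMap.id)
    (counitAr : (TensorProduct.rid R A).toLinearMap ∘ₗ εA.lTensor A ∘ₗ δA = LinearMap.id)
    (unitl : ∀ x : A, μA (uA ⊗ₜ[R] x) = x)
    (unitr : ∀ x : A, μA (x ⊗ₜ[R] uA) = x)
    (lH1 : μA ∘ₗ map S μA ∘ₗ (TensorProduct.assoc R A A A).toLinearMap ∘ₗ δA.rTensor A
      = (TensorProduct.lid R A).toLinearMap ∘ₗ εA.rTensor A)
    (rH2 : μA ∘ₗ map μA S ∘ₗ (TensorProduct.assoc R A A A).symm.toLinearMap ∘ₗ δA.lTensor A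
      = (TensorProduct.rid R A).toLinearMap ∘ₗ εA.lTensor A)
    (hone : ∀ h : H, φ (h ⊗ₜ[R] uA) = εH h • uA)
    (hmag : μA ∘ₗ map φ φ ∘ₗ (tensorTensorTensorComm R H H A A).toLinearMap
        ∘ₗ δH.rTensor (A ⊗[R] A) = φ ∘ₗ μA.lTensor H)
    (hcou : εA ∘ₗ φ = (TensorProduct.lid R R).toLinearMap ∘ₗ map εH εA)
    (hcom : δA ∘ₗ φ = map φ φ ∘ₗ (tensorTensorTensorComm R H H A A).toLinearMap
        ∘ₗ δH.rTensor (A ⊗[R] A) ∘ₗ δA.lTensor H) :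
    φ ∘ₗ S.lTensor H = S ∘ₗ φ := by
  set Δm : H ⊗[R] A →ₗ[R] (H ⊗[R] A) ⊗[R] (H ⊗[R] A) := (tensorTensorTensorComm R H H A A).toLinearMap ∘ₗ map δH δA with hΔm
  set E : H ⊗[R] A →ₗ[R] R := (TensorProduct.lid R R).toLinearMap ∘ₗ map εH εA with hE
  set u1 : R →ₗ[R] A := LinearMap.toSpanSingleton R A uA with hu1
  -- convenient forms of hypotheses
  have hcom' : δA ∘ₗ φ = map φ φ ∘ₗ Δm := by
    rw [hcom, hΔm, LinearMap.rTensor_comp_lTensor]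
  have coassocH' : map δH LinearMap.id ∘ₗ δH
      = (TensorProduct.assoc R H H H).symm.toLinearMap ∘ₗ (map LinearMap.id δH ∘ₗ δH) := by
    have : δH.rTensor H ∘ₗ δH
        = (TensorProduct.assoc R H H H).symm.toLinearMap ∘ₗ (δH.lTensor H ∘ₗ δH) := by
      rw [← coassocH]
      apply LinearMap.ext; intro x
      simp
    exact this
  have coassocA' : map δA LinearMap.id ∘ₗ δA
      = (TensorProduct.assoc R A A A).symm.toLinearMap ∘ₗ (map LinearMap.id δA ∘ₗ δA) := by
    have : δA.rTensor A ∘ₗ δA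
        = (TensorProduct.assoc R A A A).symm.toLinearMap ∘ₗ (δA.lTensor A ∘ₗ δA) := by
      rw [← coassocA]
      apply LinearMap.ext; intro x
      simp
    exact this
  -- (L1): μA ∘ (S ⊗ id)-variant ∘ δA = unit ∘ counit
  have L1 : μA ∘ₗ S.lTensor A ∘ₗ δA = u1 ∘ₗ εA := by
    have paux : μA ∘ₗ map μA S ∘ₗ (TensorProduct.assoc R A A A).symm.toLinearMap
        ∘ₗ TensorProduct.mk R A (A ⊗[R] A) uA = μA ∘ₗ S.lTensor A := by
      apply TensorProduct.ext'
      intro x y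
      simp [unitl]
    apply LinearMap.ext; intro v
    have hv := LinearMap.congr_fun rH2 (uA ⊗ₜ[R] v)
    simp only [LinearMap.coe_comp, Function.comp_apply, LinearMap.lTensor_tmul,
      LinearEquiv.coe_coe, rid_tmul] at hv
    have hp := LinearMap.congr_fun paux (δA v)
    simp only [LinearMap.coe_comp, Function.comp_apply, TensorProduct.mk_apply,
      LinearEquiv.coe_coe] at hp
    simp only [LinearMap.coe_comp, Function.comp_apply]
    rw [← hp, hv, hu1, LinearMap.toSpanSingleton_apply]
  -- (P4)
  have P4 : φ ∘ₗ u1.lTensor H = u1 ∘ₗ εH ∘ₗ (TensorProduct.rid R H).toLinearMap := by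
    apply TensorProduct.ext'
    intro h r
    simp [hu1, LinearMap.toSpanSingleton_apply, hone, smul_smul, mul_comm]
  -- (P5)
  have P5 : εH ∘ₗ (TensorProduct.rid R H).toLinearMap ∘ₗ εA.lTensor H = E := by
    rw [hE]
    apply TensorProduct.ext'
    intro h a
    simp [mul_comm]
  -- (P6)
  have P6 : μA ∘ₗ u1.lTensor A = (TensorProduct.rid R A).toLinearMap := by
    apply TensorProduct.ext'
    intro x r
    simp [hu1, LinearMap.toSpanSingleton_apply, unitr]
  -- elementwise hypotheses
  have e_hmag : ∀ w : H ⊗[R] (A ⊗[R] A),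
      μA (map φ φ ((tensorTensorTensorComm R H H A A) (δH.rTensor (A ⊗[R] A) w))) = φ (μA.lTensor H w) := by
    intro w
    simpa using LinearMap.congr_fun hmag w
  have e_lH1 : ∀ w : A ⊗[R] A,
      μA (map S μA ((TensorProduct.assoc R A A A) (δA.rTensor A w)))
        = (TensorProduct.lid R A) (εA.rTensor A w) := by
    intro w
    simpa using LinearMap.congr_fun lH1 w
  -- coassociativity of Δm
  have C1e : ∀ t : H ⊗[R] A,
      (TensorProduct.assoc R (H ⊗[R] A) (H ⊗[R] A) (H ⊗[R] A))
          (Δm.rTensor (H ⊗[R] A) (Δm t))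
        = Δm.lTensor (H ⊗[R] A) (Δm t) := by
    have hA2 : (map δH δA).rTensor (H ⊗[R] A) ∘ₗ (tensorTensorTensorComm R H H A A).toLinearMap
        = (tensorTensorTensorComm R (H ⊗[R] H) H (A ⊗[R] A) A).toLinearMap
          ∘ₗ map (map δH LinearMap.id) (map δA LinearMap.id) := by
      have h := aux_ttc_natural δH (LinearMap.id (R := R) (M := H)) δA
        (LinearMap.id (R := R) (M := A))
      simp only [TensorProduct.map_id] at h
      exact h.symm
    have hB2 : (map δH δA).lTensor (H ⊗[R] A) ∘ₗ (tensorTensorTensorComm R H H A A).toLinearMap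
        = (tensorTensorTensorComm R H (H ⊗[R] H) A (A ⊗[R] A)).toLinearMap
          ∘ₗ map (map LinearMap.id δH) (map LinearMap.id δA) := by
      have h := aux_ttc_natural (LinearMap.id (R := R) (M := H)) δH
        (LinearMap.id (R := R) (M := A)) δA
      simp only [TensorProduct.map_id] at h
      exact h.symm
    have hA3 : map (map δH LinearMap.id) (map δA LinearMap.id) ∘ₗ map δH δA
        = map (TensorProduct.assoc R H H H).symm.toLinearMap
            (TensorProduct.assoc R A A A).symm.toLinearMap
          ∘ₗ map (map LinearMap.id δH ∘ₗ δH) (map LinearMap.id δA ∘ₗ δA) := by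
      rw [← TensorProduct.map_comp, coassocH', coassocA', TensorProduct.map_comp]
    have hB3 : map (map LinearMap.id δH) (map LinearMap.id δA) ∘ₗ map δH δA
        = map (map LinearMap.id δH ∘ₗ δH) (map LinearMap.id δA ∘ₗ δA) := by
      rw [← TensorProduct.map_comp]
    intro t
    have eA2 := LinearMap.congr_fun hA2 (map δH δA t)
    have eB2 := LinearMap.congr_fun hB2 (map δH δA t)
    have eA3 := LinearMap.congr_fun hA3 t
    have eB3 := LinearMap.congr_fun hB3 t
    have eA4 := LinearMap.congr_fun (aux_coassoc_plumb (R := R) H A)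
      (map (map LinearMap.id δH ∘ₗ δH) (map LinearMap.id δA ∘ₗ δA) t)
    simp only [LinearMap.coe_comp, Function.comp_apply, LinearEquiv.coe_coe] at eA2 eB2 eA3 eB3 eA4
    rw [hΔm]
    simp only [LinearMap.coe_comp, Function.comp_apply, LinearEquiv.coe_coe,
      LinearMap.rTensor_comp, LinearMap.lTensor_comp]
    rw [eA2, eA3, eA4, eB2, eB3]
  -- counit identities for Δm
  have C2e : ∀ t : H ⊗[R] A,
      (TensorProduct.lid R (H ⊗[R] A)) (E.rTensor (H ⊗[R] A) (Δm t)) = t := by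
    have h2 : map ((TensorProduct.lid R H).toLinearMap ∘ₗ εH.rTensor H)
          ((TensorProduct.lid R A).toLinearMap ∘ₗ εA.rTensor A) ∘ₗ map δH δA
        = LinearMap.id := by
      rw [← TensorProduct.map_comp, LinearMap.comp_assoc, LinearMap.comp_assoc,
        counitHl, counitAl, TensorProduct.map_id]
    intro t
    have h1 := LinearMap.congr_fun (aux_lid_ttc εH εA) (map δH δA t)
    have h3 := LinearMap.congr_fun h2 t
    simp only [LinearMap.coe_comp, Function.comp_apply, LinearEquiv.coe_coe,
      LinearMap.id_coe, id_eq] at h1 h3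
    rw [hΔm, hE]
    simp only [LinearMap.coe_comp, Function.comp_apply, LinearEquiv.coe_coe]
    rw [h1, h3]
  have C3e : ∀ t : H ⊗[R] A,
      (TensorProduct.rid R (H ⊗[R] A)) (E.lTensor (H ⊗[R] A) (Δm t)) = t := by
    have h2 : map ((TensorProduct.rid R H).toLinearMap ∘ₗ εH.lTensor H)
          ((TensorProduct.rid R A).toLinearMap ∘ₗ εA.lTensor A) ∘ₗ map δH δA
        = LinearMap.id := by
      rw [← TensorProduct.map_comp, LinearMap.comp_assoc, LinearMap.comp_assoc,
        counitHr, counitAr, TensorProduct.map_id]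
    intro t
    have h1 := LinearMap.congr_fun (aux_rid_ttc εH εA) (map δH δA t)
    have h3 := LinearMap.congr_fun h2 t
    simp only [LinearMap.coe_comp, Function.comp_apply, LinearEquiv.coe_coe,
      LinearMap.id_coe, id_eq] at h1 h3
    rw [hΔm, hE]
    simp only [LinearMap.coe_comp, Function.comp_apply, LinearEquiv.coe_coe]
    rw [h1, h3]
  -- the auxiliary morphism g = μA ∘ (φ ⊗ (φ∘(H⊗S))) ∘ Δm equals u1 ∘ E
  have hg : μA ∘ₗ map φ (φ ∘ₗ S.lTensor H) ∘ₗ Δm = u1 ∘ₗ E := by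
    have step1 : map φ (φ ∘ₗ S.lTensor H) = map φ φ ∘ₗ map LinearMap.id (S.lTensor H) := by
      rw [← TensorProduct.map_comp, LinearMap.comp_id]
    have step2 : map LinearMap.id (S.lTensor H) ∘ₗ (tensorTensorTensorComm R H H A A).toLinearMap
        = (tensorTensorTensorComm R H H A A).toLinearMap ∘ₗ map LinearMap.id (S.lTensor A) := by
      have h := aux_ttc_natural (LinearMap.id (R := R) (M := H))
        (LinearMap.id (R := R) (M := H)) (LinearMap.id (R := R) (M := A)) S
      simp only [TensorProduct.map_id] at h
      exact h.symm
    have step3 : map LinearMap.id (S.lTensor A) ∘ₗ map δH δA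
        = map δH (S.lTensor A ∘ₗ δA) := by
      rw [← TensorProduct.map_comp, LinearMap.id_comp]
    have step4 : map δH (S.lTensor A ∘ₗ δA)
        = δH.rTensor (A ⊗[R] A) ∘ₗ (S.lTensor A ∘ₗ δA).lTensor H := by
      rw [LinearMap.rTensor_comp_lTensor]
    apply LinearMap.ext; intro t
    have es1 := LinearMap.congr_fun step1 ((tensorTensorTensorComm R H H A A).toLinearMap (map δH δA t))
    have es2 := LinearMap.congr_fun step2 (map δH δA t)
    have es3 := LinearMap.congr_fun step3 t
    have es4 := LinearMap.congr_fun step4 t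
    simp only [LinearMap.coe_comp, Function.comp_apply, LinearEquiv.coe_coe] at es1 es2 es3 es4
    rw [hΔm]
    simp only [LinearMap.coe_comp, Function.comp_apply, LinearEquiv.coe_coe]
    rw [es1, es2, es3, es4, e_hmag]
    -- now goal : φ (μA.lTensor H ((S.lTensor A ∘ₗ δA).lTensor H t)) = u1 (E t)
    have es5 : μA.lTensor H ∘ₗ (S.lTensor A ∘ₗ δA).lTensor H
        = (u1 ∘ₗ εA).lTensor H := by
      rw [← LinearMap.lTensor_comp, L1]
    have es5' := LinearMap.congr_fun es5 t
    simp only [LinearMap.coe_comp, Function.comp_apply] at es5'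
    rw [es5']
    have es6 : (u1 ∘ₗ εA).lTensor H = u1.lTensor H ∘ₗ εA.lTensor H :=
      LinearMap.lTensor_comp _ _ _
    have es6' := LinearMap.congr_fun es6 t
    simp only [LinearMap.coe_comp, Function.comp_apply] at es6'
    rw [es6']
    have es7 := LinearMap.congr_fun P4 (εA.lTensor H t)
    simp only [LinearMap.coe_comp, Function.comp_apply, LinearEquiv.coe_coe] at es7
    rw [es7]
    have es8 := LinearMap.congr_fun P5 t
    simp only [LinearMap.coe_comp, Function.comp_apply, LinearEquiv.coe_coe] at es8
    rw [es8]
  -- main computation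
  apply LinearMap.ext; intro t
  simp only [LinearMap.coe_comp, Function.comp_apply]
  conv_lhs => rw [← C2e t]
  have r2 := LinearMap.congr_fun (aux_lid_map E (φ ∘ₗ S.lTensor H)) (Δm t)
  simp only [LinearMap.coe_comp, Function.comp_apply, LinearEquiv.coe_coe] at r2
  rw [← r2]
  have r3 : map E (φ ∘ₗ S.lTensor H)
      = εA.rTensor A ∘ₗ map φ (φ ∘ₗ S.lTensor H) := by
    rw [← hcou]
    calc map (εA ∘ₗ φ) (φ ∘ₗ S.lTensor H)
        = map (εA ∘ₗ φ) (LinearMap.id ∘ₗ (φ ∘ₗ S.lTensor H)) := by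
          rw [LinearMap.id_comp]
      _ = map εA LinearMap.id ∘ₗ map φ (φ ∘ₗ S.lTensor H) :=
          TensorProduct.map_comp _ _ _ _
      _ = εA.rTensor A ∘ₗ map φ (φ ∘ₗ S.lTensor H) := rfl
  have r3e := LinearMap.congr_fun r3 (Δm t)
  simp only [LinearMap.coe_comp, Function.comp_apply] at r3e
  rw [r3e, ← e_lH1 (map φ (φ ∘ₗ S.lTensor H) (Δm t))]
  have s1 : δA.rTensor A ∘ₗ map φ (φ ∘ₗ S.lTensor H)
      = map (map φ φ) (φ ∘ₗ S.lTensor H) ∘ₗ Δm.rTensor (H ⊗[R] A) := by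
    calc δA.rTensor A ∘ₗ map φ (φ ∘ₗ S.lTensor H)
        = map (δA ∘ₗ φ) (LinearMap.id ∘ₗ (φ ∘ₗ S.lTensor H)) :=
          (TensorProduct.map_comp _ _ _ _).symm
      _ = map (map φ φ ∘ₗ Δm) ((φ ∘ₗ S.lTensor H) ∘ₗ LinearMap.id) := by
          rw [LinearMap.id_comp, LinearMap.comp_id, hcom']
      _ = map (map φ φ) (φ ∘ₗ S.lTensor H) ∘ₗ map Δm LinearMap.id :=
          TensorProduct.map_comp _ _ _ _
      _ = map (map φ φ) (φ ∘ₗ S.lTensor H) ∘ₗ Δm.rTensor (H ⊗[R] A) := rfl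
  have s1e := LinearMap.congr_fun s1 (Δm t)
  simp only [LinearMap.coe_comp, Function.comp_apply] at s1e
  rw [s1e]
  have s2 := LinearMap.congr_fun (aux_assoc_natural φ φ (φ ∘ₗ S.lTensor H))
    (Δm.rTensor (H ⊗[R] A) (Δm t))
  simp only [LinearMap.coe_comp, Function.comp_apply, LinearEquiv.coe_coe] at s2
  rw [s2, C1e t]
  have s3 : map S μA ∘ₗ map φ (map φ (φ ∘ₗ S.lTensor H))
      = map (S ∘ₗ φ) (μA ∘ₗ map φ (φ ∘ₗ S.lTensor H)) :=
    (TensorProduct.map_comp _ _ _ _).symm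
  have s3e := LinearMap.congr_fun s3 (Δm.lTensor (H ⊗[R] A) (Δm t))
  simp only [LinearMap.coe_comp, Function.comp_apply] at s3e
  rw [s3e]
  have s4 : map (S ∘ₗ φ) (μA ∘ₗ map φ (φ ∘ₗ S.lTensor H)) ∘ₗ Δm.lTensor (H ⊗[R] A)
      = map (S ∘ₗ φ) (μA ∘ₗ map φ (φ ∘ₗ S.lTensor H) ∘ₗ Δm) := by
    calc map (S ∘ₗ φ) (μA ∘ₗ map φ (φ ∘ₗ S.lTensor H)) ∘ₗ map LinearMap.id Δm
        = map ((S ∘ₗ φ) ∘ₗ LinearMap.id) ((μA ∘ₗ map φ (φ ∘ₗ S.lTensor H)) ∘ₗ Δm) :=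
          (TensorProduct.map_comp _ _ _ _).symm
      _ = map (S ∘ₗ φ) (μA ∘ₗ map φ (φ ∘ₗ S.lTensor H) ∘ₗ Δm) := by
          rw [LinearMap.comp_id, LinearMap.comp_assoc]
  have s4e := LinearMap.congr_fun s4 (Δm t)
  simp only [LinearMap.coe_comp, Function.comp_apply] at s4e
  rw [s4e, hg]
  have s5 : map (S ∘ₗ φ) (u1 ∘ₗ E) = map LinearMap.id u1 ∘ₗ map (S ∘ₗ φ) E := by
    calc map (S ∘ₗ φ) (u1 ∘ₗ E)
        = map (LinearMap.id ∘ₗ (S ∘ₗ φ)) (u1 ∘ₗ E) := by rw [LinearMap.id_comp]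
      _ = map LinearMap.id u1 ∘ₗ map (S ∘ₗ φ) E := TensorProduct.map_comp _ _ _ _
  have s5e := LinearMap.congr_fun s5 (Δm t)
  simp only [LinearMap.coe_comp, Function.comp_apply] at s5e
  rw [s5e]
  have s6 := LinearMap.congr_fun P6 (map (S ∘ₗ φ) E (Δm t))
  simp only [LinearMap.coe_comp, Function.comp_apply, LinearEquiv.coe_coe] at s6
  have s6' : μA (map LinearMap.id u1 (map (S ∘ₗ φ) E (Δm t)))
      = (TensorProduct.rid R A) (map (S ∘ₗ φ) E (Δm t)) := s6
  rw [s6']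
  have s7 := LinearMap.congr_fun (aux_rid_map E (S ∘ₗ φ)) (Δm t)
  simp only [LinearMap.coe_comp, Function.comp_apply, LinearEquiv.coe_coe] at s7
  rw [s7, C3e t]

end Core

/-- For the smash product morphism `Ψ = (φ_A⊗H)∘(H⊗c_{H,A})∘(δ_H⊗A)` associated to a left
`H`-quasimodule magma-and-comonoid `(A, φ_A)` satisfying (cesp1) and (cesp2), one has
`Ψ∘(H⊗λ_A) = (λ_A⊗H)∘Ψ`. -/

theorem smashPsi_antipode_commute {R : Type*} [CommRing R] {A H : Type*}
    [AddCommGroup A] [Module R A] [AddCommGroup H] [Module R H]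
    (hA : HopfQuasigroup R A) (hH : HopfQuasigroup R H) (φA : H ⊗[R] A →ₗ[R] A)
    (hqm : IsQuasimoduleMagmaComonoid hA hH φA)
    (hc1 : Cesp1 hH φA) (hc2 : Cesp2 hH φA) :
    smashPsi hH φA ∘ₗ hA.antipode.lTensor H
      = hA.antipode.rTensor H ∘ₗ smashPsi hH φA := by
  have key : φA ∘ₗ hA.antipode.lTensor H = hA.antipode ∘ₗ φA := by
    obtain ⟨hu, hq1, hq2, hone, hmag, hcou, hcom⟩ := hqm
    exact phi_antipode_core hA.mul hA.unit hA.counit hA.comul hA.antipode hH.comul hH.counit φA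
      hH.coassoc hA.coassoc hH.counit_left hH.counit_right hA.counit_left hA.counit_right
      hA.mul_unit_left hA.mul_unit_right hA.antipode_lH₁ hA.antipode_rH₂ hone hmag hcou hcom
  have ekey : ∀ (h : H) (a : A),
      φA (h ⊗ₜ[R] hA.antipode a) = hA.antipode (φA (h ⊗ₜ[R] a)) := by
    intro h a
    have := LinearMap.congr_fun key (h ⊗ₜ[R] a)
    simpa using this
  have W : (φA.rTensor H ∘ₗ (TensorProduct.assoc R H A H).symm.toLinearMap
        ∘ₗ ((TensorProduct.comm R H A).toLinearMap).lTensor H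
        ∘ₗ (TensorProduct.assoc R H H A).toLinearMap) ∘ₗ hA.antipode.lTensor (H ⊗[R] H)
      = hA.antipode.rTensor H
        ∘ₗ (φA.rTensor H ∘ₗ (TensorProduct.assoc R H A H).symm.toLinearMap
        ∘ₗ ((TensorProduct.comm R H A).toLinearMap).lTensor H
        ∘ₗ (TensorProduct.assoc R H H A).toLinearMap) := by
    apply TensorProduct.ext_threefold
    intro x y a
    simp [ekey]
  unfold smashPsi
  apply LinearMap.ext; intro t
  have e1 : hH.comul.rTensor A (hA.antipode.lTensor H t)
      = hA.antipode.lTensor (H ⊗[R] H) (hH.comul.rTensor A t) := by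
    have h : hH.comul.rTensor A ∘ₗ hA.antipode.lTensor H
        = hA.antipode.lTensor (H ⊗[R] H) ∘ₗ hH.comul.rTensor A := by
      rw [LinearMap.rTensor_comp_lTensor, LinearMap.lTensor_comp_rTensor]
    have h2 := LinearMap.congr_fun h t
    simp only [LinearMap.coe_comp, Function.comp_apply] at h2
    exact h2
  have e2 := LinearMap.congr_fun W (hH.comul.rTensor A t)
  simp only [LinearMap.coe_comp, Function.comp_apply, LinearEquiv.coe_coe] at e2
  simp only [LinearMap.coe_comp, Function.comp_apply, LinearEquiv.coe_coe]
  rw [e1, e2]
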